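/- If the total weights of two alternating weight-label lists input to FreeMerge are equal, i.e. Σ_{i=1}^m wᵢˣ = Σ_{j=1}^n wⱼʸ, then the last weight in the output list FreeMerge(X, Y) equals 0. -/

import Mathlib

noncomputable def freeMerge {α : Type*} : List (ℝ × α) → List (ℝ × α) → List (ℝ × α)
  | [], Y => Y
  | X, [] => X
  | (wx, x) :: X, (wy, y) :: Y =>
      if wx < wy then (wx, x) :: freeMerge X ((wy - wx, y) :: Y)
      else (wy, y) :: freeMerge ((wx - wy, x) :: X) Y
termination_by X Y => X.length + Y.length
decreasing_by all_goals simp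

/-!
Each step of `freeMerge` removes the same weight from both inputs, so the difference of the two
total weights is invariant, and nonnegativity of the weights is preserved. Every emitted pair
leaves the other list nonempty, so the output ends with the leftover of one input. With equal
totals that leftover has total weight `0`, hence all its weights vanish, in particular the last.
-/

theorem freeMerge_nil_right {α : Type*} (X : List (ℝ × α)) : freeMerge X [] = X := by
  cases X <;> simp [freeMerge]

theorem freeMerge_eq_nil_iff {α : Type*} (X Y : List (ℝ × α)) :
    freeMerge X Y = [] ↔ X = [] ∧ Y = [] := by
  match X, Y with
  | [], _ => simp [freeMerge]
  | _ :: _, [] => simp [freeMerge]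
  | (wx, x) :: X, (wy, y) :: Y =>
    rw [freeMerge]
    split_ifs <;> simp

theorem fst_eq_zero_of_mem_of_sum_eq_zero {α : Type*} {L : List (ℝ × α)}
    (hw : ∀ p ∈ L, 0 ≤ p.1) (hsum : (L.map Prod.fst).sum = 0) {p : ℝ × α} (hp : p ∈ L) :
    p.1 = 0 :=
  List.all_zero_of_le_zero_le_of_sum_eq_zero (by simpa using hw) hsum (List.mem_map_of_mem hp)

theorem freeMerge_getLast?_fst_eq_zero {α : Type*} (X Y : List (ℝ × α))
    (hwX : ∀ p ∈ X, 0 ≤ p.1) (hwY : ∀ p ∈ Y, 0 ≤ p.1)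
    (hsum : (X.map Prod.fst).sum = (Y.map Prod.fst).sum)
    {p : ℝ × α} (hp : (freeMerge X Y).getLast? = some p) : p.1 = 0 := by
  induction X, Y using freeMerge.induct with
  | case1 Y =>
    rw [freeMerge] at hp
    exact fst_eq_zero_of_mem_of_sum_eq_zero hwY (by simpa using hsum.symm) (List.mem_of_getLast? hp)
  | case2 X =>
    rw [freeMerge_nil_right] at hp
    exact fst_eq_zero_of_mem_of_sum_eq_zero hwX (by simpa using hsum) (List.mem_of_getLast? hp)
  | case3 wx x X wy y Y hlt ih =>
    simp only [List.forall_mem_cons] at hwX hwY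
    simp only [List.map_cons, List.sum_cons] at hsum
    rw [freeMerge, if_pos hlt, List.getLast?_cons_of_ne_nil (by simp [freeMerge_eq_nil_iff])]
      at hp
    refine ih hwX.2 ?_ (by simp; linarith) hp
    exact List.forall_mem_cons.mpr ⟨by simp; linarith, hwY.2⟩
  | case4 wx x X wy y Y hge ih =>
    simp only [List.forall_mem_cons] at hwX hwY
    simp only [List.map_cons, List.sum_cons] at hsum
    rw [freeMerge, if_neg hge, List.getLast?_cons_of_ne_nil (by simp [freeMerge_eq_nil_iff])]
      at hp
    refine ih ?_ hwY.2 (by simp; linarith) hp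
    exact List.forall_mem_cons.mpr ⟨by simp; linarith, hwX.2⟩

theorem freeMerge_last_weight_zero_general {α : Type*} (X Y : List (ℝ × α))
    (hwX : ∀ p ∈ X, 0 ≤ p.1) (hwY : ∀ p ∈ Y, 0 ≤ p.1)
    (hX : X ≠ [])
    (hsum : (X.map Prod.fst).sum = (Y.map Prod.fst).sum) :
    ∃ p : ℝ × α, (freeMerge X Y).getLast? = some p ∧ p.1 = 0 := by
  have hne : freeMerge X Y ≠ [] := by simp [freeMerge_eq_nil_iff, hX]
  obtain ⟨p, hp⟩ := Option.isSome_iff_exists.mp (List.getLast?_isSome.mpr hne)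
  exact ⟨p, hp, freeMerge_getLast?_fst_eq_zero X Y hwX hwY hsum hp⟩

/-- if the total weights of the two input lists are equal, then the last
weight of `freeMerge X Y` is `0`. -/
theorem freeMerge_last_weight_zero {α : Type*} (X Y : List (ℝ × α))
    (hwX : ∀ p ∈ X, 0 ≤ p.1) (hwY : ∀ p ∈ Y, 0 ≤ p.1)
    (hdisj : ∀ a, a ∈ X.map Prod.snd → a ∉ Y.map Prod.snd)
    (hX : X ≠ []) (hY : Y ≠ [])
    (hsum : (X.map Prod.fst).sum = (Y.map Prod.fst).sum) :
    ∃ p : ℝ × α, (freeMerge X Y).getLast? = some p ∧ p.1 = 0 :=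
  freeMerge_last_weight_zero_general X Y hwX hwY hX hsum
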